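/- arXiv:1004.4127 — 7 statements merged into one kernel-verified Lean document; each statement's English description precedes it below -/
import Mathlib

section
/- A connected graph Γ admits a partition of its edge set into copies of the path P₃ (the path with 3 vertices and 2 edges) if and only if the number of edges of Γ is even. -/
/-!
Two edges forming a `P₃` meet in a vertex, so a `P₃`-decomposition amounts to pairing up the
edges so that paired edges meet; in particular the number of edges is even. Conversely, orient
the edges arbitrarily. Reversing the orientation along a path changes the parity of the
in-degree exactly at its two ends, and when the number of edges is even the in-degrees sum to an
even number, so odd in-degrees come in pairs; by connectivity they can all be removed. Once
every in-degree is even, pairing up the edges entering each vertex gives the decomposition.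
-/

open SimpleGraph

/-- The complete graph on the set `s` of natural numbers, viewed as a graph on `ℕ`. -/
def Kon (s : Set ℕ) : SimpleGraph ℕ where
  Adj x y := x ≠ y ∧ x ∈ s ∧ y ∈ s
  symm := ⟨fun x y ⟨h, hx, hy⟩ => ⟨h.symm, hy, hx⟩⟩
  loopless := ⟨fun x h => h.1 rfl⟩

/-- `B` is a copy of `Γ`: there is an injection of vertices under which the
edges of `B` are exactly the images of the edges of `Γ`. -/
def IsCopy {α β : Type*} (Γ : SimpleGraph α) (B : SimpleGraph β) : Prop :=
  ∃ φ : α ↪ β, ∀ x y : β, B.Adj x y ↔ ∃ a b, Γ.Adj a b ∧ φ a = x ∧ φ b = y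

/-- A `(G, Γ)`-design: a set of copies of `Γ`, each a subgraph of `G` with
nonempty edge set, whose edge sets partition the edge set of `G`. -/
def IsDesign {α β : Type*} (G : SimpleGraph β) (Γ : SimpleGraph α)
    (D : Set (SimpleGraph β)) : Prop :=
  (∀ B ∈ D, B ≤ G ∧ IsCopy Γ B ∧ B.edgeSet.Nonempty) ∧
  ∀ e ∈ G.edgeSet, ∃! B, B ∈ D ∧ e ∈ B.edgeSet

/-- A down-link from the design `D` to the design `D'`: each block is mapped
to a subgraph of itself. -/
def IsDownlink {β : Type*} (D D' : Set (SimpleGraph β))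
    (f : SimpleGraph β → SimpleGraph β) : Prop :=
  ∀ B ∈ D, f B ∈ D' ∧ f B ≤ B

open Finset

theorem Finset.exists_involution_of_even_card_fiber {α β : Type*} [DecidableEq β]
    (s : Finset α) (f : α → β) (h : ∀ b, Even #{a ∈ s | f a = b}) :
    ∃ σ : α → α, ∀ a ∈ s, σ a ∈ s ∧ σ a ≠ a ∧ σ (σ a) = a ∧ f (σ a) = f a := by
  let H := SimpleGraph.fromRel fun a a' : α => f a = f a'
  have hM (b : β) : ∃ M : H.Subgraph, M.verts = ↑{a ∈ s | f a = b} ∧ M.IsMatching := by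
    refine (IsClique.even_iff_exists_isMatching (fun a ha a' ha' hne => ?_) (Set.toFinite _)).mp
      (by rw [Set.ncard_coe_finset]; exact h b)
    simp_all [H]
  choose M hMverts hMmatch using hM
  have hmatch := Subgraph.IsMatching.iSup hMmatch fun b b' hbb' => by
    refine Set.disjoint_of_subset (M b).support_subset_verts (M b').support_subset_verts ?_
    rw [hMverts, hMverts, Finset.disjoint_coe]
    exact disjoint_filter.mpr fun a _ h₁ h₂ => hbb' (h₁.symm.trans h₂)
  have hverts : ∀ a, a ∈ (⨆ b, M b).verts ↔ a ∈ s := by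
    simp [Subgraph.verts_iSup, hMverts]
  choose! σ hσ using fun a (ha : a ∈ s) => (hmatch ((hverts a).mpr ha)).exists
  refine ⟨σ, fun a ha => ?_⟩
  have hσs : σ a ∈ s := (hverts _).mp (hσ a ha).snd_mem
  obtain ⟨hne, hfσ⟩ := SimpleGraph.fromRel_adj _ _ _ |>.mp (hσ a ha).adj_sub
  exact ⟨hσs, hne.symm, (hmatch ((hverts _).mpr hσs)).unique (hσ _ hσs) (hσ a ha).symm,
    hfσ.elim Eq.symm id⟩

section Copies

variable {α β : Type*}

theorem isCopy_iff_exists_eq_map {G : SimpleGraph α} {B : SimpleGraph β} :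
    IsCopy G B ↔ ∃ φ : α ↪ β, B = G.map φ := by
  simp only [IsCopy, SimpleGraph.ext_iff, funext_iff, eq_iff_iff, map_adj]

theorem IsCopy.ncard_edgeSet {G : SimpleGraph α} {B : SimpleGraph β} (h : IsCopy G B) :
    B.edgeSet.ncard = G.edgeSet.ncard := by
  obtain ⟨φ, rfl⟩ := isCopy_iff_exists_eq_map.mp h
  rw [edgeSet_map, Set.ncard_image_of_injective _ φ.sym2Map.injective]

end Copies

namespace SimpleGraph

theorem pathGraph_three_edgeSet : (pathGraph 3).edgeSet = {s(0, 1), s(1, 2)} := by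
  ext e
  induction e with
  | h i j => fin_cases i <;> fin_cases j <;> simp [pathGraph_adj, Sym2.eq_swap]

variable {V : Type*}

theorem edgeSet_fromEdgeSet_pair {e₁ e₂ : Sym2 V} (h₁ : ¬e₁.IsDiag) (h₂ : ¬e₂.IsDiag) :
    (fromEdgeSet {e₁, e₂}).edgeSet = {e₁, e₂} := by
  rw [edgeSet_fromEdgeSet, sdiff_eq_left]
  simp [Set.disjoint_left, h₁, h₂]

theorem isCopy_pathGraph_three_fromEdgeSet {e₁ e₂ : Sym2 V} {v : V} (h₁ : ¬e₁.IsDiag)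
    (h₂ : ¬e₂.IsDiag) (hne : e₁ ≠ e₂) (hv₁ : v ∈ e₁) (hv₂ : v ∈ e₂) :
    IsCopy (pathGraph 3) (fromEdgeSet {e₁, e₂}) := by
  obtain ⟨a, rfl⟩ : ∃ a, s(a, v) = e₁ := ⟨_, Sym2.eq_swap.trans (Sym2.other_spec hv₁)⟩
  obtain ⟨c, rfl⟩ : ∃ c, s(v, c) = e₂ := ⟨_, Sym2.other_spec hv₂⟩
  have hav : a ≠ v := fun h => h₁ (Sym2.mk_isDiag_iff.mpr h)
  have hvc : v ≠ c := fun h => h₂ (Sym2.mk_isDiag_iff.mpr h)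
  have hac : a ≠ c := fun h => hne (by rw [h, Sym2.eq_swap])
  let φ : Fin 3 ↪ V := ⟨![a, v, c], by
    intro i j
    fin_cases i <;> fin_cases j <;> simp [hav, hvc, hac, hav.symm, hvc.symm, hac.symm]⟩
  refine isCopy_iff_exists_eq_map.mpr ⟨φ, edgeSet_injective ?_⟩
  rw [edgeSet_fromEdgeSet_pair h₁ h₂, edgeSet_map, pathGraph_three_edgeSet, Set.image_pair]
  rfl

variable [DecidableEq V]

/- An orientation of the edges is encoded as a function `f` choosing the head `f e ∈ e` of each
edge `e`. -/
noncomputable def reverseOn (S : Finset (Sym2 V)) (f : Sym2 V → V) (e : Sym2 V) : V :=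
  if h : e ∈ S ∧ f e ∈ e then Sym2.Mem.other h.2 else f e

theorem reverseOn_mem {S : Finset (Sym2 V)} {f : Sym2 V → V} {e : Sym2 V} (hf : f e ∈ e) :
    reverseOn S f e ∈ e := by
  unfold reverseOn
  split_ifs
  exacts [Sym2.other_mem _, hf]

theorem reverseOn_eq_iff {S : Finset (Sym2 V)} {f : Sym2 V → V} {e : Sym2 V} {v : V}
    (heS : e ∈ S) (hf : f e ∈ e) (he : ¬e.IsDiag) : reverseOn S f e = v ↔ v ∈ e ∧ f e ≠ v := by
  have hne := Sym2.other_ne he hf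
  have hmem : v ∈ e ↔ v = f e ∨ v = Sym2.Mem.other hf := by
    nth_rw 1 [← Sym2.other_spec hf]
    exact Sym2.mem_iff
  rw [reverseOn, dif_pos ⟨heS, hf⟩, hmem]
  grind

section Orientation

variable [Fintype V] (G : SimpleGraph V) [DecidableRel G.Adj]

def inDegree (f : Sym2 V → V) (v : V) : ℕ := #{e ∈ G.edgeFinset | f e = v}

theorem sum_inDegree (f : Sym2 V → V) : ∑ v, G.inDegree f v = #G.edgeFinset :=
  (card_eq_sum_card_fiberwise fun e _ => mem_univ (f e)).symm

theorem exists_ne_not_even_inDegree (hE : Even #G.edgeFinset) {f : Sym2 V → V} {x : V}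
    (hx : ¬Even (G.inDegree f x)) : ∃ y ≠ x, ¬Even (G.inDegree f y) := by
  by_contra! h
  rw [← sum_inDegree, ← add_sum_erase _ _ (mem_univ x), Nat.even_add] at hE
  exact hx (hE.mpr (even_sum _ fun y hy => h y (ne_of_mem_erase hy)))

variable {G}

theorem inDegree_reverseOn_modEq {S : Finset (Sym2 V)} {f : Sym2 V → V}
    (hf : ∀ e ∈ G.edgeSet, f e ∈ e) (hS : S ⊆ G.edgeFinset) (v : V) :
    G.inDegree (reverseOn S f) v ≡ G.inDegree f v + #{e ∈ S | v ∈ e} [MOD 2] := by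
  have hS' : {e ∈ S | v ∈ e} = {e ∈ G.edgeFinset | e ∈ S ∧ v ∈ e} := by
    rw [← filter_filter, filter_mem_eq_inter, inter_eq_right.mpr hS]
  rw [← ZMod.natCast_eq_natCast_iff, Nat.cast_add, inDegree, inDegree, hS',
    natCast_card_filter, natCast_card_filter, natCast_card_filter, ← sum_add_distrib]
  -- On a reversed edge containing `v`, exactly one of the two orientations has head `v`.
  refine sum_congr rfl fun e he => ?_
  have heG := mem_edgeFinset.mp he
  by_cases heS : e ∈ S
  · simp only [reverseOn_eq_iff heS (hf e heG) (G.not_isDiag_of_mem_edgeSet heG)]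
    have := hf e heG
    by_cases hv : v ∈ e <;> by_cases hfv : f e = v <;> simp_all; decide
  · simp [reverseOn, heS]

theorem Walk.IsTrail.even_inDegree_reverseOn_iff {f : Sym2 V → V}
    (hf : ∀ e ∈ G.edgeSet, f e ∈ e) {x y : V} {p : G.Walk x y} (hp : p.IsTrail) (hxy : x ≠ y)
    (v : V) :
    Even (G.inDegree (reverseOn p.edges.toFinset f) v) ↔
      (Even (G.inDegree f v) ↔ v ≠ x ∧ v ≠ y) := by
  have hS : p.edges.toFinset ⊆ G.edgeFinset := fun e he =>
    mem_edgeFinset.mpr (p.edges_subset_edgeSet (List.mem_toFinset.mp he))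
  have hcount : #{e ∈ p.edges.toFinset | v ∈ e} = p.edges.countP (v ∈ ·) := by
    rw [List.countP_eq_length_filter, ← List.toFinset_card_of_nodup (hp.edges_nodup.filter _),
      List.toFinset_filter]
    simp
  rw [Nat.even_iff, inDegree_reverseOn_modEq hf hS v, ← Nat.even_iff, Nat.even_add, hcount,
    hp.even_countP_edges_iff, imp_iff_right hxy]

theorem Connected.exists_forall_even_inDegree (hconn : G.Connected) (hE : Even #G.edgeFinset) :
    ∃ f : Sym2 V → V, (∀ e ∈ G.edgeSet, f e ∈ e) ∧ ∀ v, Even (G.inDegree f v) := by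
  obtain ⟨f, hf⟩ : ∃ f : Sym2 V → V, ∀ e ∈ G.edgeSet, f e ∈ e :=
    ⟨fun e => e.out.1, fun e _ => Sym2.out_fst_mem e⟩
  induction hn : #{v | ¬Even (G.inDegree f v)} using Nat.strong_induction_on generalizing f with
  | _ n ih =>
  subst hn
  by_cases hodd : ∃ x, ¬Even (G.inDegree f x)
  · obtain ⟨x, hx⟩ := hodd
    obtain ⟨y, hyx, hy⟩ := G.exists_ne_not_even_inDegree hE hx
    let p : G.Path x y := (hconn.preconnected x y).some.toPath
    have hrev := p.2.isTrail.even_inDegree_reverseOn_iff hf hyx.symm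
    refine ih _ (card_lt_card ?_) (reverseOn (p : G.Walk x y).edges.toFinset f)
      (fun e he => reverseOn_mem (hf e he)) rfl
    refine ssubset_iff_of_subset (fun v => ?_) |>.mpr ⟨x, mem_filter.mpr ⟨mem_univ x, hx⟩,
      fun h => (mem_filter.mp h).2 ((hrev x).mpr (iff_of_false hx fun h => h.1 rfl))⟩
    simp only [mem_filter, mem_univ, true_and, hrev]
    grind
  · push Not at hodd
    exact ⟨f, hf, hodd⟩

end Orientation

end SimpleGraph

section Designs

variable {V : Type*} {G : SimpleGraph V}

theorem IsDesign.even_card_edgeFinset [Fintype V] [DecidableRel G.Adj]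
    {D : Set (SimpleGraph V)} (hD : IsDesign G (pathGraph 3) D) : Even #G.edgeFinset := by
  classical
  choose! block hblock huniq using hD.2
  rw [card_eq_sum_card_image block]
  refine even_sum _ fun B hB => ?_
  obtain ⟨e, he, rfl⟩ := mem_image.mp hB
  have he := mem_edgeFinset.mp he
  obtain ⟨hle, hcopy, -⟩ := hD.1 _ (hblock e he).1
  have hfiber :
      (↑{e' ∈ G.edgeFinset | block e' = block e} : Set (Sym2 V)) = (block e).edgeSet := by
    ext e'
    simp only [coe_filter, mem_edgeFinset, Set.mem_ofPred_eq]
    refine ⟨fun ⟨he', h⟩ => h ▸ (hblock e' he').2, fun h => ?_⟩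
    have he' := edgeSet_mono hle h
    exact ⟨he', (huniq e' he' _ ⟨(hblock e he).1, h⟩).symm⟩
  rw [← Set.ncard_coe_finset, hfiber, hcopy.ncard_edgeSet, pathGraph_three_edgeSet,
    Set.ncard_pair (by decide)]
  exact even_two

theorem isDesign_pathGraph_three_of_involution {σ : Sym2 V → Sym2 V}
    (hσ : ∀ e ∈ G.edgeSet, σ e ∈ G.edgeSet ∧ σ e ≠ e ∧ σ (σ e) = e ∧ ∃ v, v ∈ e ∧ v ∈ σ e) :
    IsDesign G (pathGraph 3) ((fun e => fromEdgeSet {e, σ e}) '' G.edgeSet) := by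
  have hblock : ∀ e ∈ G.edgeSet, (fromEdgeSet {e, σ e}).edgeSet = {e, σ e} := fun e he =>
    edgeSet_fromEdgeSet_pair (G.not_isDiag_of_mem_edgeSet he)
      (G.not_isDiag_of_mem_edgeSet (hσ e he).1)
  refine ⟨?_, fun e he => ⟨_, ⟨⟨e, he, rfl⟩, by simp [hblock e he]⟩, ?_⟩⟩
  · rintro _ ⟨e, he, rfl⟩
    obtain ⟨hσe, hne, -, v, hv, hvσ⟩ := hσ e he
    refine ⟨?_, isCopy_pathGraph_three_fromEdgeSet (G.not_isDiag_of_mem_edgeSet he)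
      (G.not_isDiag_of_mem_edgeSet hσe) hne.symm hv hvσ, ⟨e, by simp [hblock e he]⟩⟩
    rw [← edgeSet_subset_edgeSet, hblock e he]
    exact Set.insert_subset he (Set.singleton_subset_iff.mpr hσe)
  · rintro _ ⟨⟨e', he', rfl⟩, hee'⟩
    rw [hblock e' he'] at hee'
    rcases hee' with rfl | rfl
    · rfl
    · simp only [(hσ e' he').2.2.1, Set.pair_comm]

theorem SimpleGraph.Connected.exists_isDesign_pathGraph_three [Fintype V] [DecidableEq V]
    [DecidableRel G.Adj] (hconn : G.Connected) (hE : Even #G.edgeFinset) :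
    ∃ D, IsDesign G (pathGraph 3) D := by
  obtain ⟨f, hf, heven⟩ := hconn.exists_forall_even_inDegree hE
  obtain ⟨σ, hσ⟩ := G.edgeFinset.exists_involution_of_even_card_fiber f heven
  refine ⟨_, isDesign_pathGraph_three_of_involution (σ := σ) fun e he => ?_⟩
  obtain ⟨hσe, hne, hσσ, hfσ⟩ := hσ e (mem_edgeFinset.mpr he)
  exact ⟨mem_edgeFinset.mp hσe, hne, hσσ, f e, hf e he, hfσ ▸ hf _ (mem_edgeFinset.mp hσe)⟩

end Designs

/-- A connected graph admits an edge-partition into copies of `P₃`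
iff its number of edges is even. -/
theorem stmt0 {V : Type*} [Fintype V] (Γ : SimpleGraph V) [DecidableRel Γ.Adj]
    (hconn : Γ.Connected) :
    (∃ D : Set (SimpleGraph V), IsDesign Γ (pathGraph 3) D) ↔
      Even Γ.edgeFinset.card := by
  classical
  exact ⟨fun ⟨D, hD⟩ => hD.even_card_edgeFinset, hconn.exists_isDesign_pathGraph_three⟩
end

section
/- If a connected graph Γ has an odd number of edges, then E(Γ) can be partitioned into a single edge together with copies of P₃ (the path with 3 vertices and 2 edges). -/
open SimpleGraph

/-! Call a graph even if each of its connected components has an even number of edges.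

If the component of `u` has an odd number of edges, then some edge `uw` can be deleted so that
the components of `u` and `w` become even: if `uw` is not a bridge this is immediate; if it is,
either both sides are already even, or the side of `u` is odd and, by induction, has an edge `uw'`
that works there, and `uw'` then works in the whole graph as well. For `Γ` this provides the single
edge `e`, leaving an even graph.

An even graph with an edge `xy` has, after possibly swapping `x` and `y`, an odd component at `x`
once `xy` is deleted; the previous step at `x` provides a second edge `xw` such that deleting the
path `y x w` leaves an even graph, and induction on the number of edges gives the decomposition. -/

namespace SimpleGraph

variable {V : Type*} {G : SimpleGraph V} {a b u v v' w w' x y : V}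

theorem Reachable.deleteEdges_reachable_or (h : G.Reachable x y) :
    (G.deleteEdges {s(a, b)}).Reachable x y ∨ (G.deleteEdges {s(a, b)}).Reachable a y ∨
      (G.deleteEdges {s(a, b)}).Reachable b y := by
  obtain ⟨p⟩ := h
  induction p with
  | nil => exact .inl .rfl
  | @cons p q _ hpq _ ih =>
    rcases ih with h | h | h
    · by_cases he : s(p, q) = s(a, b)
      · rcases Sym2.eq_iff.mp he with ⟨rfl, rfl⟩ | ⟨rfl, rfl⟩
        exacts [.inr (.inr h), .inr (.inl h)]
      · exact .inl ((deleteEdges_adj.mpr ⟨hpq, by simpa using he⟩).reachable.trans h)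
    exacts [.inr (.inl h), .inr (.inr h)]

theorem Reachable.deleteEdges_of_not_isBridge (hb : ¬ G.IsBridge s(a, b))
    (h : G.Reachable x y) : (G.deleteEdges {s(a, b)}).Reachable x y := by
  rw [isBridge_iff, not_not] at hb
  obtain ⟨p⟩ := h
  induction p with
  | nil => exact .rfl
  | @cons p q _ hpq _ ih =>
    by_cases he : s(p, q) = s(a, b)
    · rcases Sym2.eq_iff.mp he with ⟨rfl, rfl⟩ | ⟨rfl, rfl⟩
      exacts [hb.trans ih, hb.symm.trans ih]
    · exact (deleteEdges_adj.mpr ⟨hpq, by simpa using he⟩).reachable.trans ih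

def componentEdges (G : SimpleGraph V) (v : V) : Set (Sym2 V) :=
  {e ∈ G.edgeSet | ∃ z ∈ e, G.Reachable v z}

def EvenComponents (G : SimpleGraph V) : Prop :=
  ∀ v, Even (G.componentEdges v).ncard

theorem mk_mem_componentEdges (hxy : G.Adj x y) (hvx : G.Reachable v x) :
    s(x, y) ∈ G.componentEdges v :=
  ⟨hxy, x, Sym2.mem_mk_left x y, hvx⟩

theorem reachable_of_mem_componentEdges {e : Sym2 V} (he : e ∈ G.componentEdges v) {z : V}
    (hz : z ∈ e) : G.Reachable v z := by
  obtain ⟨he, z', hz', hvz'⟩ := he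
  by_cases h : z' = z
  · exact h ▸ hvz'
  · rw [(Sym2.mem_and_mem_iff h).mp ⟨hz', hz⟩] at he
    exact hvz'.trans (G.mem_edgeSet.mp he).reachable

theorem componentEdges_eq_of_reachable (h : G.Reachable v v') :
    G.componentEdges v = G.componentEdges v' := by
  ext e
  exact and_congr_right fun _ => exists_congr fun z => and_congr_right fun _ =>
    ⟨h.symm.trans, h.trans⟩

theorem Preconnected.componentEdges_eq (hG : G.Preconnected) (v : V) :
    G.componentEdges v = G.edgeSet := by
  ext e
  induction e with
  | h p q => exact ⟨fun he => he.1, fun he => mk_mem_componentEdges he (hG v p)⟩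

theorem componentEdges_deleteEdges_subset (s : Set (Sym2 V)) (v : V) :
    (G.deleteEdges s).componentEdges v ⊆ G.componentEdges v :=
  fun _ ⟨he, z, hz, hvz⟩ =>
    ⟨(edgeSet_deleteEdges s ▸ he).1, z, hz, hvz.mono (deleteEdges_le s)⟩

theorem exists_adj_of_componentEdges_nonempty (h : (G.componentEdges u).Nonempty) :
    ∃ w, G.Adj u w := by
  obtain ⟨e, he⟩ := h
  induction e with
  | h p q =>
    obtain ⟨walk⟩ := reachable_of_mem_componentEdges he (Sym2.mem_mk_left p q)
    by_cases hup : u = p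
    · exact ⟨q, hup ▸ he.1⟩
    · exact ⟨_, walk.adj_snd (walk.not_nil_of_ne hup)⟩

theorem componentEdges_deleteEdges_of_not_reachable (huw : G.Adj u w)
    (hvu : ¬ G.Reachable v u) :
    (G.deleteEdges {s(u, w)}).componentEdges v = G.componentEdges v := by
  refine (componentEdges_deleteEdges_subset _ v).antisymm fun e he => ?_
  have hne : e ≠ s(u, w) := by
    rintro rfl
    exact hvu (reachable_of_mem_componentEdges he (Sym2.mem_mk_left u w))
  obtain ⟨he, z, hz, hvz⟩ := he
  refine ⟨by simpa [edgeSet_deleteEdges] using ⟨he, hne⟩, z, hz, ?_⟩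
  rcases hvz.deleteEdges_reachable_or (a := u) (b := w) with h | h | h
  · exact h
  · exact absurd (hvz.trans (h.mono (deleteEdges_le _)).symm) hvu
  · exact absurd ((hvz.trans (h.mono (deleteEdges_le _)).symm).trans huw.symm.reachable) hvu

theorem componentEdges_deleteEdges_of_not_isBridge (hb : ¬ G.IsBridge s(u, w)) :
    (G.deleteEdges {s(u, w)}).componentEdges u = G.componentEdges u \ {s(u, w)} := by
  refine subset_antisymm (fun e he => ⟨componentEdges_deleteEdges_subset _ u he,
    (edgeSet_deleteEdges _ ▸ he.1 : e ∈ G.edgeSet \ {s(u, w)}).2⟩) ?_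
  rintro e ⟨⟨he, z, hz, huz⟩, hne⟩
  exact ⟨by simpa [edgeSet_deleteEdges] using ⟨he, hne⟩, z, hz,
    huz.deleteEdges_of_not_isBridge hb⟩

theorem componentEdges_eq_insert_union (huw : G.Adj u w) :
    G.componentEdges u = insert s(u, w)
      ((G.deleteEdges {s(u, w)}).componentEdges u ∪
        (G.deleteEdges {s(u, w)}).componentEdges w) := by
  refine subset_antisymm (fun e he => ?_) ?_
  · by_cases hne : e = s(u, w)
    · exact .inl hne
    obtain ⟨he, z, hz, huz⟩ := he
    have he' : e ∈ (G.deleteEdges {s(u, w)}).edgeSet := by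
      simpa [edgeSet_deleteEdges] using ⟨he, hne⟩
    rcases huz.deleteEdges_reachable_or (a := u) (b := w) with h | h | h
    exacts [.inr (.inl ⟨he', z, hz, h⟩), .inr (.inl ⟨he', z, hz, h⟩),
      .inr (.inr ⟨he', z, hz, h⟩)]
  · rintro e (rfl | he | he)
    · exact mk_mem_componentEdges huw .rfl
    · exact componentEdges_deleteEdges_subset _ u he
    · exact componentEdges_eq_of_reachable huw.reachable ▸
        componentEdges_deleteEdges_subset _ w he

variable [Finite V]

theorem ncard_componentEdges_of_not_isBridge (huw : G.Adj u w) (hb : ¬ G.IsBridge s(u, w)) :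
    (G.componentEdges u).ncard = ((G.deleteEdges {s(u, w)}).componentEdges u).ncard + 1 := by
  rw [componentEdges_deleteEdges_of_not_isBridge hb,
    Set.ncard_sdiff_singleton_add_one (mk_mem_componentEdges huw .rfl)]

theorem ncard_componentEdges_of_isBridge (huw : G.Adj u w) (hb : G.IsBridge s(u, w)) :
    (G.componentEdges u).ncard = ((G.deleteEdges {s(u, w)}).componentEdges u).ncard +
      ((G.deleteEdges {s(u, w)}).componentEdges w).ncard + 1 := by
  have hdisj : Disjoint ((G.deleteEdges {s(u, w)}).componentEdges u)
      ((G.deleteEdges {s(u, w)}).componentEdges w) := by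
    refine Set.disjoint_left.mpr fun e heu hew => ?_
    obtain ⟨z, hz, -⟩ := heu.2
    exact hb ((reachable_of_mem_componentEdges heu hz).trans
      (reachable_of_mem_componentEdges hew hz).symm)
  have hnotMem : s(u, w) ∉ (G.deleteEdges {s(u, w)}).componentEdges u ∪
      (G.deleteEdges {s(u, w)}).componentEdges w := by
    rintro (⟨he, -⟩ | ⟨he, -⟩) <;> simp [edgeSet_deleteEdges] at he
  rw [componentEdges_eq_insert_union huw, Set.ncard_insert_of_notMem hnotMem,
    Set.ncard_union_eq hdisj]

theorem even_componentEdges_deleteEdges_of_isBridge (huw : G.Adj u w) (hb : G.IsBridge s(u, w))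
    (hw : Odd ((G.deleteEdges {s(u, w)}).componentEdges w).ncard)
    (huw' : (G.deleteEdges {s(u, w)}).Adj u w')
    (hu' : Even (((G.deleteEdges {s(u, w)}).deleteEdges {s(u, w')}).componentEdges u).ncard)
    (hw' : Even (((G.deleteEdges {s(u, w)}).deleteEdges {s(u, w')}).componentEdges w').ncard) :
    Even ((G.deleteEdges {s(u, w')}).componentEdges u).ncard ∧
      Even ((G.deleteEdges {s(u, w')}).componentEdges w').ncard := by
  set K := G.deleteEdges {s(u, w')}
  have hK : K.deleteEdges {s(u, w)} = (G.deleteEdges {s(u, w)}).deleteEdges {s(u, w')} := by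
    simp only [K, deleteEdges_deleteEdges, Set.union_comm]
  have hKuw : K.Adj u w :=
    deleteEdges_adj.mpr ⟨huw, fun h =>
      (deleteEdges_adj.mp huw').2 (Set.eq_of_mem_singleton h).symm⟩
  have hKb : K.IsBridge s(u, w) := hb.anti (deleteEdges_le _)
  -- In `K` the bridge `uw` joins the even component of `u` in `G - uw - uw'` to the odd one of `w`.
  have hKu : Even (K.componentEdges u).ncard := by
    have hwfar := componentEdges_deleteEdges_of_not_reachable huw' fun h => hb h.symm
    rw [ncard_componentEdges_of_isBridge hKuw hKb, hK, hwfar]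
    exact (hu'.add_odd hw).add_one
  refine ⟨hKu, ?_⟩
  by_cases huw'K : K.Reachable u w'
  · rwa [← componentEdges_eq_of_reachable huw'K]
  · rwa [← componentEdges_deleteEdges_of_not_reachable hKuw fun h => huw'K h.symm, hK]

theorem exists_adj_even_componentEdges_deleteEdges (hodd : Odd (G.componentEdges u).ncard) :
    ∃ w, G.Adj u w ∧ Even ((G.deleteEdges {s(u, w)}).componentEdges u).ncard ∧
      Even ((G.deleteEdges {s(u, w)}).componentEdges w).ncard := by
  induction hn : (G.componentEdges u).ncard using Nat.strong_induction_on generalizing G with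
  | _ n ih =>
  obtain ⟨w, huw⟩ := exists_adj_of_componentEdges_nonempty
    (Set.nonempty_of_ncard_ne_zero hodd.pos.ne')
  by_cases hb : G.IsBridge s(u, w)
  · have hcard := ncard_componentEdges_of_isBridge huw hb
    rcases Nat.even_or_odd ((G.deleteEdges {s(u, w)}).componentEdges u).ncard with hu | hu
    · refine ⟨w, huw, hu, ?_⟩
      rw [Nat.odd_iff] at hodd
      rw [Nat.even_iff] at hu ⊢
      omega
    · have hw : Odd ((G.deleteEdges {s(u, w)}).componentEdges w).ncard := by
        rw [Nat.odd_iff] at hodd hu ⊢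
        omega
      obtain ⟨w', huw', hu', hw'⟩ := ih _ (by omega) hu rfl
      exact ⟨w', (deleteEdges_adj.mp huw').1,
        even_componentEdges_deleteEdges_of_isBridge huw hb hw huw' hu' hw'⟩
  · have hu : Even ((G.deleteEdges {s(u, w)}).componentEdges u).ncard := by
      rwa [ncard_componentEdges_of_not_isBridge huw hb, Nat.odd_add_one, Nat.not_odd_iff_even]
        at hodd
    have hwu : (G.deleteEdges {s(u, w)}).Reachable u w := by rwa [isBridge_iff, not_not] at hb
    exact ⟨w, huw, hu, componentEdges_eq_of_reachable hwu ▸ hu⟩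

theorem exists_adj_evenComponents_deleteEdges (hodd : Odd (G.componentEdges u).ncard)
    (hrest : ∀ v, ¬ G.Reachable u v → Even (G.componentEdges v).ncard) :
    ∃ w, G.Adj u w ∧ (G.deleteEdges {s(u, w)}).EvenComponents := by
  obtain ⟨w, huw, hu, hw⟩ := exists_adj_even_componentEdges_deleteEdges hodd
  refine ⟨w, huw, fun v => ?_⟩
  by_cases huv : G.Reachable u v
  · rcases huv.deleteEdges_reachable_or (a := u) (b := w) with h | h | h <;>
      rwa [← componentEdges_eq_of_reachable h]
  · rw [componentEdges_deleteEdges_of_not_reachable huw fun h => huv h.symm]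
    exact hrest v huv

theorem odd_componentEdges_deleteEdges_or (hxy : G.Adj x y) (hx : Even (G.componentEdges x).ncard) :
    Odd ((G.deleteEdges {s(x, y)}).componentEdges x).ncard ∨
      Odd ((G.deleteEdges {s(x, y)}).componentEdges y).ncard := by
  by_cases hb : G.IsBridge s(x, y)
  · rw [ncard_componentEdges_of_isBridge hxy hb, Nat.even_iff] at hx
    simp only [Nat.odd_iff]
    omega
  · rw [ncard_componentEdges_of_not_isBridge hxy hb, Nat.even_add_one, Nat.not_even_iff_odd] at hx
    exact .inl hx

theorem even_componentEdges_deleteEdges_of_not_reachable (hG : G.EvenComponents)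
    (hxy : G.Adj x y) (hx : Odd ((G.deleteEdges {s(x, y)}).componentEdges x).ncard)
    (hxv : ¬ (G.deleteEdges {s(x, y)}).Reachable x v) :
    Even ((G.deleteEdges {s(x, y)}).componentEdges v).ncard := by
  by_cases hyv : (G.deleteEdges {s(x, y)}).Reachable y v
  · have hb : G.IsBridge s(x, y) := fun h => hxv (h.trans hyv)
    have hGx := hG x
    rw [ncard_componentEdges_of_isBridge hxy hb, Nat.even_iff] at hGx
    rw [Nat.odd_iff] at hx
    rw [← componentEdges_eq_of_reachable hyv, Nat.even_iff]
    omega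
  · have hGxv : ¬ G.Reachable v x := fun h => by
      rcases h.symm.deleteEdges_reachable_or (a := x) (b := y) with h | h | h
      exacts [hxv h, hxv h, hyv h]
    rw [componentEdges_deleteEdges_of_not_reachable hxy hGxv]
    exact hG v

theorem EvenComponents.exists_adj_adj_deleteEdges (hG : G.EvenComponents)
    (hE : G.edgeSet.Nonempty) :
    ∃ x y w, G.Adj x y ∧ G.Adj x w ∧ y ≠ w ∧
      ((G.deleteEdges {s(x, y)}).deleteEdges {s(x, w)}).EvenComponents := by
  obtain ⟨e, he⟩ := hE
  induction e with
  | h p q =>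
  obtain ⟨x, y, hxy, hx⟩ : ∃ x y, G.Adj x y ∧
      Odd ((G.deleteEdges {s(x, y)}).componentEdges x).ncard := by
    rcases odd_componentEdges_deleteEdges_or he (hG p) with h | h
    · exact ⟨p, q, he, h⟩
    · exact ⟨q, p, he.symm, by rwa [Sym2.eq_swap]⟩
  obtain ⟨w, hxw, hG'⟩ := exists_adj_evenComponents_deleteEdges hx fun v hxv =>
    even_componentEdges_deleteEdges_of_not_reachable hG hxy hx hxv
  obtain ⟨hxw, hne⟩ := deleteEdges_adj.mp hxw
  exact ⟨x, y, w, hxy, hxw, fun h => hne (by simp [h]), hG'⟩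

theorem edgeSet_map_pathGraph_three (φ : Fin 3 ↪ V) :
    ((pathGraph 3).map φ).edgeSet = {s(φ 0, φ 1), s(φ 1, φ 2)} := by
  have hP : (pathGraph 3).edgeSet = {s(0, 1), s(1, 2)} := by
    ext e
    induction e with | h p q => fin_cases p <;> fin_cases q <;> simp [pathGraph_adj]
  simp [edgeSet_map, hP, Set.image_insert_eq]

end SimpleGraph

theorem isCopy_map {α β : Type*} (Γ : SimpleGraph α) (φ : α ↪ β) : IsCopy Γ (Γ.map φ) :=
  ⟨φ, fun _ _ => map_adj φ Γ _ _⟩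

theorem IsDesign.insert {α β : Type*} {G B : SimpleGraph β} {Γ : SimpleGraph α}
    {D : Set (SimpleGraph β)} (hD : IsDesign (G.deleteEdges B.edgeSet) Γ D) (hBG : B ≤ G)
    (hB : IsCopy Γ B) (hne : B.edgeSet.Nonempty) : IsDesign G Γ (insert B D) := by
  refine ⟨?_, fun e he => ?_⟩
  · rintro B' (rfl | hB')
    · exact ⟨hBG, hB, hne⟩
    · obtain ⟨hle, hcopy, hne'⟩ := hD.1 B' hB'
      exact ⟨hle.trans (deleteEdges_le _), hcopy, hne'⟩
  by_cases heB : e ∈ B.edgeSet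
  · refine ⟨B, ⟨.inl rfl, heB⟩, ?_⟩
    rintro B' ⟨rfl | hB', heB'⟩
    · rfl
    · have := edgeSet_mono (hD.1 B' hB').1 heB'
      simp [heB] at this
  · obtain ⟨B', ⟨hB', heB'⟩, huniq⟩ :=
      hD.2 e (by simpa [edgeSet_deleteEdges] using ⟨he, heB⟩)
    refine ⟨B', ⟨.inr hB', heB'⟩, ?_⟩
    rintro B'' ⟨rfl | hB'', heB''⟩
    · exact absurd heB'' heB
    · exact huniq B'' ⟨hB'', heB''⟩

theorem SimpleGraph.EvenComponents.exists_isDesign_pathGraph_three {V : Type*} [Finite V]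
    {G : SimpleGraph V} (hG : G.EvenComponents) : ∃ D, IsDesign G (pathGraph 3) D := by
  induction hn : G.edgeSet.ncard using Nat.strong_induction_on generalizing G with
  | _ n ih =>
  rcases G.edgeSet.eq_empty_or_nonempty with hE | hE
  · exact ⟨∅, by simp, by simp [hE]⟩
  obtain ⟨x, y, w, hxy, hxw, hyw, hG'⟩ := hG.exists_adj_adj_deleteEdges hE
  have hlt : ((G.deleteEdges {s(x, y)}).deleteEdges {s(x, w)}).edgeSet.ncard < n := hn ▸ calc
    _ ≤ (G.deleteEdges {s(x, y)}).edgeSet.ncard :=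
      Set.ncard_le_ncard (edgeSet_mono (deleteEdges_le _))
    _ < G.edgeSet.ncard := by
      rw [edgeSet_deleteEdges]
      exact Set.ncard_sdiff_singleton_lt_of_mem hxy
  obtain ⟨D, hD⟩ := ih _ hlt hG' rfl
  let φ : Fin 3 ↪ V := ⟨![y, x, w], Fin.cons_injective_iff.mpr
    ⟨by simp [Matrix.range_cons, hxy.ne', hyw], injective_pair_iff_ne.mpr hxw.ne⟩⟩
  have hB : ((pathGraph 3).map φ).edgeSet = {s(x, y), s(x, w)} := by
    rw [edgeSet_map_pathGraph_three, Sym2.eq_swap]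
    rfl
  refine ⟨insert ((pathGraph 3).map φ) D,
    IsDesign.insert ?_ ?_ (isCopy_map _ φ) (by simp [hB])⟩
  · rwa [hB, ← Set.singleton_union, ← deleteEdges_deleteEdges]
  · rw [← edgeSet_subset_edgeSet, hB]
    simp [Set.insert_subset_iff, hxy, hxw]

/-- A connected graph with an odd number of edges can be partitioned into a
single edge together with copies of `P₃`. -/
theorem stmt1 {V : Type*} [Fintype V] (Γ : SimpleGraph V) [DecidableRel Γ.Adj]
    (hconn : Γ.Connected) (hodd : Odd Γ.edgeFinset.card) :
    ∃ e ∈ Γ.edgeSet, ∃ D : Set (SimpleGraph V),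
      IsDesign (Γ.deleteEdges {e}) (pathGraph 3) D := by
  obtain ⟨u⟩ := hconn.nonempty
  have hu : Odd (Γ.componentEdges u).ncard := by
    rwa [hconn.preconnected.componentEdges_eq, ← coe_edgeFinset, Set.ncard_coe_finset]
  obtain ⟨w, huw, hG⟩ := exists_adj_evenComponents_deleteEdges hu
    fun v huv => absurd (hconn.preconnected u v) huv
  exact ⟨s(u, w), huw, hG.exists_isDesign_pathGraph_three⟩
end

section
/- If there exists a down-link from a (K_v,Γ)-design to a (K_n,P₃)-design, then n > (v-1)·sqrt(2/|E(Γ)|); equivalently, (v-1)·sqrt(|E(Γ')|/|E(Γ)|) < n where Γ' = P₃ has 2 edges. -/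
/-!
Count edges: `K_v` has `|E(Γ)|·|D|` edges and `K_n` has `2·|D'|`. A down-link is injective,
since distinct blocks of `D` are edge-disjoint while each image block of `D'` has an edge, so
`|D| ≤ |D'|` and `2·C(v,2) ≤ |E(Γ)|·C(n,2)`. The bound follows from `(v-1)² < v(v-1)` and
`n(n-1) ≤ n²`.
-/

open SimpleGraph

namespace IsCopy

variable {α β : Type*} {Γ : SimpleGraph α} {B : SimpleGraph β}

lemma exists_eq_map (h : IsCopy Γ B) : ∃ φ : α ↪ β, B = Γ.map φ := by
  obtain ⟨φ, hφ⟩ := h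
  exact ⟨φ, by ext x y; rw [hφ, map_adj]⟩

lemma ncard_edgeSet_s4 (h : IsCopy Γ B) : B.edgeSet.ncard = Γ.edgeSet.ncard := by
  obtain ⟨φ, rfl⟩ := h.exists_eq_map
  rw [edgeSet_map]
  exact Set.ncard_image_of_injective _ φ.sym2Map.injective

lemma finite_edgeSet [Finite α] (h : IsCopy Γ B) : B.edgeSet.Finite := by
  obtain ⟨φ, rfl⟩ := h.exists_eq_map
  rw [edgeSet_map]
  exact Γ.edgeSet.toFinite.image _

end IsCopy

namespace IsDesign

variable {α β : Type*} {G : SimpleGraph β} {Γ : SimpleGraph α} {D : Set (SimpleGraph β)}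

noncomputable def block (hD : IsDesign G Γ D) (e : G.edgeSet) : D :=
  ⟨(hD.2 e e.2).exists.choose, (hD.2 e e.2).exists.choose_spec.1⟩

lemma mem_edgeSet_block (hD : IsDesign G Γ D) (e : G.edgeSet) :
    (e : Sym2 β) ∈ (hD.block e : SimpleGraph β).edgeSet :=
  (hD.2 e e.2).exists.choose_spec.2

lemma block_eq (hD : IsDesign G Γ D) {e : G.edgeSet} {B : SimpleGraph β} (hB : B ∈ D)
    (he : (e : Sym2 β) ∈ B.edgeSet) : hD.block e = ⟨B, hB⟩ :=
  Subtype.ext <| (hD.2 e e.2).unique ⟨(hD.block e).2, hD.mem_edgeSet_block e⟩ ⟨hB, he⟩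

lemma block_surjective (hD : IsDesign G Γ D) : Function.Surjective hD.block := by
  rintro ⟨B, hB⟩
  obtain ⟨hBG, -, e, he⟩ := hD.1 B hB
  exact ⟨⟨e, edgeSet_mono hBG he⟩, hD.block_eq hB he⟩

noncomputable def edgeSetEquivSigma (hD : IsDesign G Γ D) :
    G.edgeSet ≃ Σ B : D, (B : SimpleGraph β).edgeSet where
  toFun e := ⟨hD.block e, e, hD.mem_edgeSet_block e⟩
  invFun p := ⟨p.2, edgeSet_mono (hD.1 p.1 p.1.2).1 p.2.2⟩
  left_inv _ := rfl
  right_inv := fun ⟨B, _, he⟩ => Sigma.subtype_ext (hD.block_eq B.2 he) rfl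

lemma finite (hD : IsDesign G Γ D) (hG : G.edgeSet.Finite) : D.Finite :=
  have : Finite G.edgeSet := hG
  Set.finite_coe_iff.mp (Finite.of_surjective _ hD.block_surjective)

lemma ncard_edgeSet_s4 (hD : IsDesign G Γ D) (hG : G.edgeSet.Finite) :
    G.edgeSet.ncard = D.ncard * Γ.edgeSet.ncard := by
  have : Fintype D := (hD.finite hG).fintype
  have (B : D) : Finite (B : SimpleGraph β).edgeSet :=
    hG.subset (edgeSet_mono (hD.1 B B.2).1)
  calc G.edgeSet.ncard = ∑ B : D, (B : SimpleGraph β).edgeSet.ncard := by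
        rw [← Nat.card_coe_set_eq, Nat.card_congr hD.edgeSetEquivSigma, Nat.card_sigma]
        rfl
    _ = D.ncard * Γ.edgeSet.ncard := by
        simp only [fun B : D => (hD.1 B B.2).2.1.ncard_edgeSet_s4, Finset.sum_const,
          Finset.card_univ, smul_eq_mul, ← Nat.card_eq_fintype_card, Nat.card_coe_set_eq]

end IsDesign

lemma IsDownlink.injOn {α α' β : Type*} {G G' : SimpleGraph β} {Γ : SimpleGraph α}
    {Γ' : SimpleGraph α'} {D D' : Set (SimpleGraph β)} {f : SimpleGraph β → SimpleGraph β}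
    (hf : IsDownlink D D' f) (hD : IsDesign G Γ D) (hD' : IsDesign G' Γ' D') :
    Set.InjOn f D := by
  intro B₁ hB₁ B₂ hB₂ hfB
  obtain ⟨e, he⟩ := (hD'.1 _ (hf B₁ hB₁).1).2.2
  have he₁ : e ∈ B₁.edgeSet := edgeSet_mono (hf B₁ hB₁).2 he
  have he₂ : e ∈ B₂.edgeSet := edgeSet_mono (hf B₂ hB₂).2 (hfB ▸ he)
  exact (hD.2 e (edgeSet_mono (hD.1 B₁ hB₁).1 he₁)).unique ⟨hB₁, he₁⟩ ⟨hB₂, he₂⟩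

lemma isCopy_top_kon_Iio (v : ℕ) : IsCopy (⊤ : SimpleGraph (Fin v)) (Kon (Set.Iio v)) := by
  refine ⟨⟨Fin.val, Fin.val_injective⟩, fun x y => ⟨?_, ?_⟩⟩
  · rintro ⟨hxy, hx, hy⟩
    exact ⟨⟨x, hx⟩, ⟨y, hy⟩, fun h => hxy (congrArg Fin.val h), rfl, rfl⟩
  · rintro ⟨a, b, hab, rfl, rfl⟩
    exact ⟨fun h => hab.ne (Fin.val_injective h), a.isLt, b.isLt⟩

lemma ncard_edgeSet_kon_Iio (v : ℕ) : (Kon (Set.Iio v)).edgeSet.ncard = v.choose 2 := by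
  rw [(isCopy_top_kon_Iio v).ncard_edgeSet_s4, ← coe_edgeFinset, Set.ncard_coe_finset,
    card_edgeFinset_top_eq_card_choose_two, Fintype.card_fin]

lemma ncard_edgeSet_pathGraph_three : (pathGraph 3).edgeSet.ncard = 2 := by
  have : (pathGraph 3).edgeSet = {s(0, 1), s(1, 2)} := by
    ext e
    induction e with
    | _ x y => fin_cases x <;> fin_cases y <;> simp [pathGraph_adj]
  rw [this, Set.ncard_pair (by decide)]

lemma sub_one_mul_sqrt_lt {v n e : ℕ} (hv : 2 ≤ v) (h : 2 * v.choose 2 ≤ e * n.choose 2) :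
    ((v : ℝ) - 1) * √(2 / e) < n := by
  have hR : (v : ℝ) * (v - 1) ≤ e * (n * (n - 1) / 2) := by
    have := (Nat.cast_le (α := ℝ)).2 h
    push_cast [Nat.cast_choose_two] at this
    linarith
  have hvR : (2 : ℝ) ≤ v := by exact_mod_cast hv
  have he : (0 : ℝ) < e := by
    rcases (Nat.cast_nonneg e : (0 : ℝ) ≤ e).lt_or_eq with h | h
    · exact h
    · rw [← h] at hR; nlinarith
  refine lt_of_pow_lt_pow_left₀ 2 n.cast_nonneg ?_
  rw [mul_pow, Real.sq_sqrt (by positivity), ← mul_div_assoc, div_lt_iff₀ he]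
  nlinarith [n.cast_nonneg (α := ℝ)]

/-- Counting bound: a down-link from a `(K_v,Γ)`-design to a `(K_n,P₃)`-design
forces `(v-1)·√(2/|E(Γ)|) < n`. -/
theorem stmt4 {α : Type*} [Fintype α] (Γ : SimpleGraph α) [DecidableRel Γ.Adj]
    (v n : ℕ) (hv : 2 ≤ v) (D D' : Set (SimpleGraph ℕ))
    (hD : IsDesign (Kon (Set.Iio v)) Γ D)
    (hD' : IsDesign (Kon (Set.Iio n)) (pathGraph 3) D')
    (f : SimpleGraph ℕ → SimpleGraph ℕ) (hf : IsDownlink D D' f) :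
    ((v : ℝ) - 1) * Real.sqrt (2 / (Γ.edgeFinset.card : ℝ)) < n := by
  have hG : (Kon (Set.Iio v)).edgeSet.ncard = D.ncard * Γ.edgeSet.ncard :=
    hD.ncard_edgeSet_s4 (isCopy_top_kon_Iio v).finite_edgeSet
  have hG' : (Kon (Set.Iio n)).edgeSet.ncard = D'.ncard * 2 := by
    rw [hD'.ncard_edgeSet_s4 (isCopy_top_kon_Iio n).finite_edgeSet, ncard_edgeSet_pathGraph_three]
  have hDD' : D.ncard ≤ D'.ncard :=
    Set.ncard_le_ncard_of_injOn f (fun B hB => (hf B hB).1) (hf.injOn hD hD')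
      (hD'.finite (isCopy_top_kon_Iio n).finite_edgeSet)
  rw [ncard_edgeSet_kon_Iio] at hG hG'
  rw [← Set.ncard_coe_finset, coe_edgeFinset]
  refine sub_one_mul_sqrt_lt hv ?_
  rw [hG, hG']
  nlinarith
end

section
/- For any (K_v,Γ)-design B with P₃ ≤ Γ, there exists w with 0 ≤ w ≤ 3 such that B can be down-linked to a (K_{v+w},P₃)-design; in particular η₂(v) ≤ v+3. -/
open SimpleGraph

/-!
Inside every block pick a path `a - c - b` (a *cherry*). Cherries of distinct blocks are
edge-disjoint, so they form a partial `P₃`-decomposition of `K_v`, and mapping each block to its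
cherry is the down-link. Add `w ∈ {1, 2, 3}` vertices so that `n = v + w ≡ 0, 1 (mod 4)`; then
`K_n` has an even number `n(n-1)/2` of edges, hence so does the leave (the edges of `K_n` in no
cherry), and the leave contains the whole star at the new vertex `u = v`. Such a graph splits
into `P₃`s: send each edge avoiding `u` to one of its endpoints, then send each star edge `ux`
to `x` or to `u` so that every `x ≠ u` receives an even number of edges; by parity `u` does too,
and the edges sent to a common vertex are paired off.
-/

open Finset

theorem Finset.even_card_of_involution {β : Type*} {s : Finset β} (i : β → β)
    (hi : ∀ a ∈ s, i a ∈ s ∧ i a ≠ a ∧ i (i a) = a) : Even #s := by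
  have h := Finset.sum_involution (f := fun _ => (1 : ZMod 2)) (fun a _ => i a)
    (fun _ _ => by decide) (fun a ha _ => (hi a ha).2.1) (fun a ha => (hi a ha).1)
    (fun a ha => (hi a ha).2.2)
  simpa [ZMod.natCast_eq_zero_iff_even] using h

theorem Finset.exists_involution_of_even {β : Type*} {s : Finset β} (hs : Even #s) :
    ∃ i : β → β, ∀ a ∈ s, i a ∈ s ∧ i a ≠ a ∧ i (i a) = a := by
  classical
  obtain ⟨k, hk⟩ := hs
  let σ : s ≃ Bool × Fin k := Fintype.equivOfCardEq (by simp [hk, two_mul])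
  let τ : Equiv.Perm s := (σ.trans (Equiv.boolNot.prodCongr (Equiv.refl _))).trans σ.symm
  have hτ_ne : ∀ x, τ x ≠ x := fun x h => by
    have := congrArg (fun y => (σ y).1) h
    simp [τ] at this
  have hτ_invol : ∀ x, τ (τ x) = x := fun x => by
    simp only [τ, Equiv.trans_apply, Equiv.apply_symm_apply, Equiv.prodCongr_apply, Prod.map_map]
    convert σ.symm_apply_apply x
    ext <;> simp [Equiv.boolNot]
  refine ⟨fun a => if ha : a ∈ s then τ ⟨a, ha⟩ else a, fun a ha => ?_⟩
  have hmem : (τ ⟨a, ha⟩ : β) ∈ s := (τ _).2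
  simp only [dif_pos ha, dif_pos hmem, Subtype.coe_eta, hτ_invol]
  exact ⟨hmem, fun h => hτ_ne _ (Subtype.ext h), trivial⟩

theorem Finset.even_card_fiber_of_forall_ne {β γ : Type*} [DecidableEq γ] {s : Finset β}
    (hs : Even #s) (g : β → γ) (u : γ) (h : ∀ x ≠ u, Even #{e ∈ s | g e = x}) :
    Even #{e ∈ s | g e = u} := by
  have hsum := card_eq_sum_card_fiberwise (t := insert u (s.image g))
    (fun e he => mem_insert_of_mem (mem_image_of_mem g he))
  rw [← add_sum_erase _ _ (mem_insert_self _ _)] at hsum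
  have hrest : Even (∑ x ∈ (insert u (s.image g)).erase u, #{e ∈ s | g e = x}) :=
    even_sum _ fun x hx => h x (ne_of_mem_erase hx)
  rw [hsum] at hs
  exact (Nat.even_add.1 hs).2 hrest

section Pairing

variable {V : Type*}

/-- A `P₃`-decomposition of the edge set `s`, encoded as the involution `p` swapping the two
edges of each block. -/
def IsP3Pairing (s : Set (Sym2 V)) (p : Sym2 V → Sym2 V) : Prop :=
  ∀ e ∈ s, p e ∈ s ∧ p e ≠ e ∧ p (p e) = e ∧ ∃ x, x ∈ e ∧ x ∈ p e

def pairingBlocks (s : Set (Sym2 V)) (p : Sym2 V → Sym2 V) : Set (SimpleGraph V) :=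
  {B | ∃ e ∈ s, B = fromEdgeSet {e, p e}}

theorem IsP3Pairing.even_card {s : Finset (Sym2 V)} {p : Sym2 V → Sym2 V}
    (hp : IsP3Pairing ↑s p) : Even #s :=
  Finset.even_card_of_involution p fun e he =>
    ⟨(hp e he).1, (hp e he).2.1, (hp e he).2.2.1⟩

theorem IsP3Pairing.piecewise {s t : Set (Sym2 V)} {p q : Sym2 V → Sym2 V}
    [DecidablePred (· ∈ s)] (hp : IsP3Pairing s p) (hq : IsP3Pairing t q)
    (hst : Disjoint s t) : IsP3Pairing (s ∪ t) (s.piecewise p q) := by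
  rintro e (he | he)
  · obtain ⟨hpe, hne, hinv, hx⟩ := hp e he
    rw [Set.piecewise_eq_of_mem _ _ _ he, Set.piecewise_eq_of_mem _ _ _ hpe]
    exact ⟨Or.inl hpe, hne, hinv, hx⟩
  · obtain ⟨hqe, hne, hinv, hx⟩ := hq e he
    have hnot : ∀ {f}, f ∈ t → f ∉ s := fun hf hs => hst.ne_of_mem hs hf rfl
    rw [Set.piecewise_eq_of_notMem _ _ _ (hnot he), Set.piecewise_eq_of_notMem _ _ _ (hnot hqe)]
    exact ⟨Or.inr hqe, hne, hinv, hx⟩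

theorem exists_isP3Pairing_of_even_fibers [DecidableEq V] (s : Finset (Sym2 V))
    (g : Sym2 V → V) (hg : ∀ e ∈ s, g e ∈ e) (heven : ∀ x, Even #{e ∈ s | g e = x}) :
    ∃ p : Sym2 V → Sym2 V, IsP3Pairing ↑s p := by
  choose i hi using fun x => Finset.exists_involution_of_even (heven x)
  refine ⟨fun e => i (g e) e, fun e he => ?_⟩
  obtain ⟨hmem, hne, hinv⟩ := hi (g e) e (mem_filter.2 ⟨he, rfl⟩)
  obtain ⟨hmem_s, hg_eq⟩ := mem_filter.1 hmem
  exact ⟨hmem_s, hne, by simp only [hg_eq, hinv], g e, hg e he, hg_eq ▸ hg _ hmem_s⟩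

section Star

variable [DecidableEq V] (s : Finset (Sym2 V)) (u : V)

noncomputable def starCount (x : V) : ℕ := #{e ∈ s | u ∉ e ∧ e.out.1 = x}

noncomputable def starEndpoint (e : Sym2 V) : V :=
  if h : u ∈ e then if Odd (starCount s u (Sym2.Mem.other h)) then Sym2.Mem.other h else u
  else e.out.1

theorem starEndpoint_mem (e : Sym2 V) : starEndpoint s u e ∈ e := by
  unfold starEndpoint; split_ifs with h
  exacts [Sym2.other_mem h, h, Sym2.out_fst_mem e]

theorem starEndpoint_of_notMem {e : Sym2 V} (hue : u ∉ e) : starEndpoint s u e = e.out.1 :=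
  dif_neg hue

theorem starEndpoint_eq_iff {x : V} (hx : x ≠ u) {e : Sym2 V} (hue : u ∈ e) :
    starEndpoint s u e = x ↔ e = s(u, x) ∧ Odd (starCount s u x) := by
  rw [starEndpoint, dif_pos hue]
  constructor
  · intro h
    split_ifs at h with hodd
    · exact ⟨h ▸ (Sym2.other_spec hue).symm, h ▸ hodd⟩
    · exact absurd h.symm hx
  · rintro ⟨rfl, hodd⟩
    have hother : Sym2.Mem.other hue = x := Sym2.congr_right.1 (Sym2.other_spec hue)
    rw [hother, if_pos hodd]

variable {s u}

theorem filter_starEndpoint_eq_and_mem (hstar : ∀ e ∈ s, ∀ x ∈ e, x ≠ u → s(u, x) ∈ s)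
    {x : V} (hx : x ≠ u) :
    {e ∈ s | starEndpoint s u e = x ∧ u ∈ e} =
      if Odd (starCount s u x) then {s(u, x)} else ∅ := by
  ext e
  rw [mem_filter]
  split_ifs with hodd
  · rw [mem_singleton]
    constructor
    · rintro ⟨-, hge, hue⟩
      exact ((starEndpoint_eq_iff s u hx hue).1 hge).1
    · rintro rfl
      obtain ⟨f, hf⟩ := card_pos.1 hodd.pos
      obtain ⟨hfs, -, hfx⟩ := mem_filter.1 hf
      refine ⟨hstar f hfs x (hfx ▸ Sym2.out_fst_mem f) hx, ?_, Sym2.mem_mk_left u x⟩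
      exact (starEndpoint_eq_iff s u hx (Sym2.mem_mk_left u x)).2 ⟨rfl, hodd⟩
  · simp only [notMem_empty, iff_false]
    rintro ⟨-, hge, hue⟩
    exact hodd ((starEndpoint_eq_iff s u hx hue).1 hge).2

theorem even_card_filter_starEndpoint_eq (hstar : ∀ e ∈ s, ∀ x ∈ e, x ≠ u → s(u, x) ∈ s)
    {x : V} (hx : x ≠ u) : Even #{e ∈ s | starEndpoint s u e = x} := by
  rw [← card_filter_add_card_filter_not (s := {e ∈ s | starEndpoint s u e = x}) (u ∈ ·),
    filter_filter, filter_filter, filter_starEndpoint_eq_and_mem hstar hx]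
  have hrest : {e ∈ s | starEndpoint s u e = x ∧ u ∉ e} = {e ∈ s | u ∉ e ∧ e.out.1 = x} :=
    filter_congr fun e _ => by
      constructor
      · rintro ⟨hge, hue⟩; exact ⟨hue, starEndpoint_of_notMem s u hue ▸ hge⟩
      · rintro ⟨hue, hex⟩; exact ⟨starEndpoint_of_notMem s u hue ▸ hex, hue⟩
  rw [hrest]
  split_ifs with hodd
  · rw [card_singleton, add_comm]; exact hodd.add_one
  · rw [card_empty, zero_add]; exact Nat.not_odd_iff_even.1 hodd

theorem exists_isP3Pairing_of_star (hstar : ∀ e ∈ s, ∀ x ∈ e, x ≠ u → s(u, x) ∈ s)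
    (heven : Even #s) : ∃ p : Sym2 V → Sym2 V, IsP3Pairing ↑s p := by
  have hfiber : ∀ x ≠ u, Even #{e ∈ s | starEndpoint s u e = x} := fun x hx =>
    even_card_filter_starEndpoint_eq hstar hx
  refine exists_isP3Pairing_of_even_fibers s _ (fun e _ => starEndpoint_mem s u e) fun x => ?_
  rcases eq_or_ne x u with rfl | hx
  · exact even_card_fiber_of_forall_ne heven _ x hfiber
  · exact hfiber x hx

end Star

theorem exists_isP3Pairing_extending [DecidableEq V] (G : SimpleGraph V) (S : Finset (Sym2 V))
    (hS : ↑S = G.edgeSet) (u : V) (hstar : ∀ e ∈ G.edgeSet, ∀ x ∈ e, x ≠ u → G.Adj u x)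
    (heven : Even #S) {C : Set (Sym2 V)} (hCG : C ⊆ G.edgeSet) (hCu : ∀ e ∈ C, u ∉ e)
    {p₀ : Sym2 V → Sym2 V} (hp₀ : IsP3Pairing C p₀) :
    ∃ p : Sym2 V → Sym2 V, IsP3Pairing G.edgeSet p ∧ ∀ e ∈ C, p e = p₀ e := by
  classical
  rw [← hS] at hstar hCG ⊢
  let Cf : Finset (Sym2 V) := {e ∈ S | e ∈ C}
  have hCf : (Cf : Set (Sym2 V)) = C := by ext e; simpa [Cf] using fun h => hCG h
  let L : Finset (Sym2 V) := S \ Cf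
  have hL : (L : Set (Sym2 V)) = ↑S \ C := by rw [coe_sdiff, hCf]
  have hL_even : Even #L := by
    rw [card_sdiff_of_subset (filter_subset _ _)]
    exact heven.tsub (IsP3Pairing.even_card (p := p₀) (by rw [hCf]; exact hp₀))
  have hL_star : ∀ e ∈ L, ∀ x ∈ e, x ≠ u → s(u, x) ∈ L := fun e he x hx hxu => by
    obtain ⟨heS, -⟩ := mem_sdiff.1 he
    refine mem_sdiff.2 ⟨?_, fun h => hCu _ ?_ (Sym2.mem_mk_left u x)⟩
    · rw [← mem_coe, hS]; exact hstar e heS x hx hxu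
    · rw [← hCf]; exact h
  obtain ⟨q, hq⟩ := exists_isP3Pairing_of_star hL_star hL_even
  refine ⟨C.piecewise p₀ q, ?_, fun e he => Set.piecewise_eq_of_mem _ _ _ he⟩
  rw [← Set.union_sdiff_cancel hCG, ← hL]
  exact hp₀.piecewise hq (hL ▸ Set.disjoint_sdiff_right)

theorem exists_isP3Pairing_of_disjoint_cherries {ι : Type*} (a c b : ι → V)
    (hab : ∀ i, a i ≠ b i)
    (hdisj : ∀ i j, ∀ e ∈ ({s(a i, c i), s(c i, b i)} : Set (Sym2 V)),
      e ∈ ({s(a j, c j), s(c j, b j)} : Set (Sym2 V)) → i = j) :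
    ∃ p : Sym2 V → Sym2 V, IsP3Pairing (⋃ i, {s(a i, c i), s(c i, b i)}) p ∧
      ∀ i, p s(a i, c i) = s(c i, b i) := by
  classical
  have hne : ∀ i, s(a i, c i) ≠ s(c i, b i) := fun i h => by
    rcases Sym2.eq_iff.1 h with ⟨h₁, h₂⟩ | ⟨h₁, -⟩
    exacts [hab i (h₁.trans h₂), hab i h₁]
  let p : Sym2 V → Sym2 V := fun e =>
    if h : ∃ i, e ∈ ({s(a i, c i), s(c i, b i)} : Set (Sym2 V)) then
      if e = s(a h.choose, c h.choose) then s(c h.choose, b h.choose) else s(a h.choose, c h.choose)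
    else e
  have hp : ∀ i, p s(a i, c i) = s(c i, b i) ∧ p s(c i, b i) = s(a i, c i) := fun i => by
    have hchoose : ∀ e ∈ ({s(a i, c i), s(c i, b i)} : Set (Sym2 V)),
        ∀ h : ∃ j, e ∈ ({s(a j, c j), s(c j, b j)} : Set (Sym2 V)), h.choose = i :=
      fun e he h => hdisj _ _ e h.choose_spec he
    constructor
    · simp only [p, hchoose _ (Or.inl rfl), if_pos]
      exact dif_pos ⟨i, Or.inl rfl⟩
    · simp only [p, hchoose _ (Or.inr rfl), if_neg (hne i).symm]
      exact dif_pos ⟨i, Or.inr rfl⟩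
  refine ⟨p, fun e he => ?_, fun i => (hp i).1⟩
  obtain ⟨i, rfl | rfl⟩ := Set.mem_iUnion.1 he
  · rw [(hp i).1, (hp i).2]
    exact ⟨Set.mem_iUnion.2 ⟨i, Or.inr rfl⟩, (hne i).symm, rfl, c i,
      Sym2.mem_mk_right _ _, Sym2.mem_mk_left _ _⟩
  · rw [(hp i).2, (hp i).1]
    exact ⟨Set.mem_iUnion.2 ⟨i, Or.inl rfl⟩, hne i, rfl, c i,
      Sym2.mem_mk_left _ _, Sym2.mem_mk_right _ _⟩

theorem isCopy_pathGraph_three {e f : Sym2 V} {x : V} (he : ¬e.IsDiag) (hf : ¬f.IsDiag)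
    (hef : e ≠ f) (hxe : x ∈ e) (hxf : x ∈ f) : IsCopy (pathGraph 3) (fromEdgeSet {e, f}) := by
  obtain ⟨a, rfl⟩ := Sym2.mem_iff_exists.1 hxe
  obtain ⟨b, rfl⟩ := Sym2.mem_iff_exists.1 hxf
  have hxa : x ≠ a := he
  have hxb : x ≠ b := hf
  have hab : a ≠ b := fun h => hef (h ▸ rfl)
  have hinj : Function.Injective ![a, x, b] := by
    intro i j
    fin_cases i <;> fin_cases j <;> simp [hxa, hxb, hab, hxa.symm, hxb.symm, hab.symm]
  have hP : ∀ i j : Fin 3, (pathGraph 3).Adj i j ↔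
      i = 0 ∧ j = 1 ∨ i = 1 ∧ j = 0 ∨ i = 1 ∧ j = 2 ∨ i = 2 ∧ j = 1 := by
    simp only [pathGraph_adj]; decide
  refine ⟨⟨![a, x, b], hinj⟩, fun y z => ?_⟩
  simp only [fromEdgeSet_adj, Set.mem_insert_iff, Set.mem_singleton_iff, Sym2.eq_iff, hP,
    or_and_right, exists_or, existsAndEq, Function.Embedding.coeFn_mk, true_and,
    Matrix.cons_val_zero, Matrix.cons_val_one, Matrix.cons_val_two, Matrix.tail_cons,
    Matrix.head_cons]
  grind

theorem IsP3Pairing.isDesign {G : SimpleGraph V} {p : Sym2 V → Sym2 V}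
    (hp : IsP3Pairing G.edgeSet p) : IsDesign G (pathGraph 3) (pairingBlocks G.edgeSet p) := by
  have hmem : ∀ e ∈ G.edgeSet, e ∈ (fromEdgeSet {e, p e}).edgeSet := fun e he =>
    by rw [edgeSet_fromEdgeSet]; exact ⟨Set.mem_insert _ _, G.not_isDiag_of_mem_edgeSet he⟩
  refine ⟨?_, fun e he => ⟨fromEdgeSet {e, p e}, ⟨⟨e, he, rfl⟩, hmem e he⟩, ?_⟩⟩
  · rintro _ ⟨e, he, rfl⟩
    obtain ⟨hpe, hne, -, x, hxe, hxpe⟩ := hp e he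
    refine ⟨?_, ?_, e, hmem e he⟩
    · rw [fromEdgeSet_le]
      rintro f ⟨rfl | rfl, -⟩ <;> assumption
    · exact isCopy_pathGraph_three (G.not_isDiag_of_mem_edgeSet he)
        (G.not_isDiag_of_mem_edgeSet hpe) hne.symm hxe hxpe
  · rintro _ ⟨⟨f, hf, rfl⟩, hef⟩
    rw [edgeSet_fromEdgeSet] at hef
    obtain ⟨rfl | rfl, -⟩ := hef
    · rfl
    · rw [(hp f hf).2.2.1, Set.pair_comm]

theorem exists_isDownlink_pairingBlocks {s : Set (Sym2 V)} {p : Sym2 V → Sym2 V}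
    {D : Set (SimpleGraph V)} (hD : ∀ B ∈ D, ∃ e ∈ s, e ∈ B.edgeSet ∧ p e ∈ B.edgeSet) :
    ∃ f, IsDownlink D (pairingBlocks s p) f := by
  have hblock : ∀ B ∈ D, ∃ B' ∈ pairingBlocks s p, B' ≤ B := fun B hB => by
    obtain ⟨e, hes, heB, hpeB⟩ := hD B hB
    refine ⟨fromEdgeSet {e, p e}, ⟨e, hes, rfl⟩, ?_⟩
    rw [fromEdgeSet_le]
    exact Set.sdiff_subset.trans (Set.pair_subset heB hpeB)
  choose! f hf using hblock
  exact ⟨f, hf⟩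

end Pairing

theorem IsCopy.exists_cherry {α β : Type*} {Γ : SimpleGraph α} {B : SimpleGraph β}
    (hB : IsCopy Γ B)
    (hΓ : ∃ φ : Fin 3 ↪ α, ∀ i j, (pathGraph 3).Adj i j → Γ.Adj (φ i) (φ j)) :
    ∃ a c b, B.Adj a c ∧ B.Adj c b ∧ a ≠ b := by
  obtain ⟨ψ, hψ⟩ := hB
  obtain ⟨φ, hφ⟩ := hΓ
  have h01 : (pathGraph 3).Adj 0 1 := by simp [pathGraph_adj]
  have h12 : (pathGraph 3).Adj 1 2 := by simp [pathGraph_adj]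
  refine ⟨ψ (φ 0), ψ (φ 1), ψ (φ 2), (hψ _ _).2 ⟨_, _, hφ _ _ h01, rfl, rfl⟩,
    (hψ _ _).2 ⟨_, _, hφ _ _ h12, rfl, rfl⟩, fun h => ?_⟩
  exact absurd (φ.injective (ψ.injective h)) (by decide)

theorem IsDesign.eq_of_mem_edgeSet {α β : Type*} {G : SimpleGraph β} {Γ : SimpleGraph α}
    {D : Set (SimpleGraph β)} (hD : IsDesign G Γ D) {B B' : SimpleGraph β} (hB : B ∈ D)
    (hB' : B' ∈ D) {e : Sym2 β} (he : e ∈ B.edgeSet) (he' : e ∈ B'.edgeSet) : B = B' :=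
  (hD.2 e (edgeSet_mono (hD.1 B hB).1 he)).unique ⟨hB, he⟩ ⟨hB', he'⟩

theorem IsDesign.exists_isP3Pairing_of_cherries {α β : Type*} {G : SimpleGraph β}
    {Γ : SimpleGraph α} {D : Set (SimpleGraph β)} (hD : IsDesign G Γ D)
    (hΓ : ∃ φ : Fin 3 ↪ α, ∀ i j, (pathGraph 3).Adj i j → Γ.Adj (φ i) (φ j)) :
    ∃ C ⊆ G.edgeSet, ∃ p₀, IsP3Pairing C p₀ ∧
      ∀ B ∈ D, ∃ e ∈ C, e ∈ B.edgeSet ∧ p₀ e ∈ B.edgeSet := by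
  choose a c b hac hcb hab using fun B : D => (hD.1 B B.2).2.1.exists_cherry hΓ
  have hcherry : ∀ B : D,
      ({s(a B, c B), s(c B, b B)} : Set (Sym2 β)) ⊆ (B : SimpleGraph β).edgeSet :=
    fun B => Set.pair_subset (hac B) (hcb B)
  obtain ⟨p₀, hp₀, hp₀_cherry⟩ := exists_isP3Pairing_of_disjoint_cherries a c b hab
    fun B B' e he he' => Subtype.ext <|
      hD.eq_of_mem_edgeSet B.2 B'.2 (hcherry B he) (hcherry B' he')
  refine ⟨_, Set.iUnion_subset fun B => (hcherry B).trans (edgeSet_mono (hD.1 B B.2).1),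
    p₀, hp₀, fun B hB => ⟨s(a ⟨B, hB⟩, c ⟨B, hB⟩), Set.mem_iUnion.2 ⟨⟨B, hB⟩, Or.inl rfl⟩,
      hac ⟨B, hB⟩, ?_⟩⟩
  rw [hp₀_cherry ⟨B, hB⟩]
  exact hcb ⟨B, hB⟩

theorem Nat.even_choose_two_of_mod_four {n : ℕ} (h : n % 4 = 0 ∨ n % 4 = 1) :
    Even (n.choose 2) := by
  have h2 : n.choose 2 * 2 = n * (n - 1) := by
    rw [Nat.choose_two_right, Nat.div_two_mul_two_of_even (Nat.even_mul_pred_self n)]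
  rcases h with h | h
  · obtain ⟨k, rfl⟩ : ∃ k, n = 4 * k := ⟨n / 4, by omega⟩
    refine ⟨k * (4 * k - 1), ?_⟩
    have : 4 * k * (4 * k - 1) = (k * (4 * k - 1) + k * (4 * k - 1)) * 2 := by ring
    omega
  · obtain ⟨k, rfl⟩ : ∃ k, n = 4 * k + 1 := ⟨n / 4, by omega⟩
    refine ⟨k * (4 * k + 1), ?_⟩
    rw [Nat.add_sub_cancel] at h2
    have : (4 * k + 1) * (4 * k) = (k * (4 * k + 1) + k * (4 * k + 1)) * 2 := by ring
    omega

theorem Nat.exists_even_choose_two_add (v : ℕ) :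
    ∃ w ≤ 3, 0 < w ∧ Even ((v + w).choose 2) := by
  obtain ⟨w, hw⟩ : ∃ w ≤ 3, 0 < w ∧ ((v + w) % 4 = 0 ∨ (v + w) % 4 = 1) := by
    rcases (by omega : v % 4 = 0 ∨ v % 4 = 1 ∨ v % 4 = 2 ∨ v % 4 = 3) with h | h | h | h
    exacts [⟨1, by omega⟩, ⟨3, by omega⟩, ⟨2, by omega⟩, ⟨1, by omega⟩]
  exact ⟨w, hw.1, hw.2.1, Nat.even_choose_two_of_mod_four hw.2.2⟩

theorem Kon_mono {s t : Set ℕ} (h : s ⊆ t) : Kon s ≤ Kon t :=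
  fun _ _ ⟨hxy, hx, hy⟩ => ⟨hxy, h hx, h hy⟩

theorem mem_of_mem_edgeSet_Kon {s : Set ℕ} {e : Sym2 ℕ} (he : e ∈ (Kon s).edgeSet) {x : ℕ}
    (hx : x ∈ e) : x ∈ s := by
  induction e using Sym2.ind with
  | _ y z => rcases Sym2.mem_iff.1 hx with rfl | rfl; exacts [he.2.1, he.2.2]

theorem Kon_Iio_eq_map (n : ℕ) :
    Kon (Set.Iio n) = (⊤ : SimpleGraph (Fin n)).map Fin.valEmbedding := by
  ext x y
  simp only [Kon, map_adj, top_adj, Set.mem_Iio]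
  constructor
  · rintro ⟨hxy, hx, hy⟩
    exact ⟨⟨x, hx⟩, ⟨y, hy⟩, fun h => hxy (Fin.mk.inj h), rfl, rfl⟩
  · rintro ⟨x, y, hxy, rfl, rfl⟩
    exact ⟨Fin.val_injective.ne hxy, x.2, y.2⟩

theorem exists_finset_eq_edgeSet_Kon_Iio (n : ℕ) :
    ∃ S : Finset (Sym2 ℕ), ↑S = (Kon (Set.Iio n)).edgeSet ∧ #S = n.choose 2 := by
  refine ⟨(⊤ : SimpleGraph (Fin n)).edgeFinset.map Fin.valEmbedding.sym2Map, ?_, ?_⟩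
  · rw [coe_map, coe_edgeFinset, Kon_Iio_eq_map, edgeSet_map]
  · rw [card_map, card_edgeFinset_top_eq_card_choose_two, Fintype.card_fin]

/-- Any `(K_v,Γ)`-design with `P₃ ≤ Γ` can be down-linked to a
`(K_{v+w},P₃)`-design for some `0 ≤ w ≤ 3`; in particular `η₂(v) ≤ v + 3`. -/
theorem stmt5 {α : Type*} (Γ : SimpleGraph α)
    (hP : ∃ φ : Fin 3 ↪ α, ∀ a b, (pathGraph 3).Adj a b → Γ.Adj (φ a) (φ b))
    (v : ℕ) (D : Set (SimpleGraph ℕ)) (hD : IsDesign (Kon (Set.Iio v)) Γ D) :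
    ∃ w ≤ 3, ∃ D' : Set (SimpleGraph ℕ),
      IsDesign (Kon (Set.Iio (v + w))) (pathGraph 3) D' ∧
      ∃ f, IsDownlink D D' f := by
  obtain ⟨C, hC, p₀, hp₀, hblocks⟩ := hD.exists_isP3Pairing_of_cherries hP
  obtain ⟨w, hw, hw_pos, hw_even⟩ := Nat.exists_even_choose_two_add v
  obtain ⟨S, hS, hS_card⟩ := exists_finset_eq_edgeSet_Kon_Iio (v + w)
  have hC_large : C ⊆ (Kon (Set.Iio (v + w))).edgeSet :=
    hC.trans (edgeSet_mono (Kon_mono (Set.Iio_subset_Iio (by omega))))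
  obtain ⟨p, hp, hp_p₀⟩ := exists_isP3Pairing_extending _ S hS v
    (fun e he x hx hxv => ⟨hxv.symm, Set.mem_Iio.2 (by omega), mem_of_mem_edgeSet_Kon he hx⟩)
    (hS_card ▸ hw_even) hC_large (fun e he hv => lt_irrefl v (mem_of_mem_edgeSet_Kon (hC he) hv))
    hp₀
  refine ⟨w, hw, _, hp.isDesign, exists_isDownlink_pairingBlocks fun B hB => ?_⟩
  obtain ⟨e, heC, heB, hp₀eB⟩ := hblocks B hB
  exact ⟨e, hC_large heC, heB, hp_p₀ e heC ▸ hp₀eB⟩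
end

section
/- In any (K_v, S_k)-design (decomposition of K_v into stars with k edges), at most one vertex of K_v fails to be the center of any star. -/
open SimpleGraph

/-- The star `S_k = K_{1,k}`: vertex `0` is the center. -/
def starGraph (k : ℕ) : SimpleGraph (Fin (k + 1)) where
  Adj x y := x ≠ y ∧ (x = 0 ∨ y = 0)
  symm := ⟨fun x y ⟨h, ho⟩ => ⟨h.symm, ho.symm⟩⟩
  loopless := ⟨fun x h => h.1 rfl⟩

/-- `c` is the center of the star block `B`: `B` has edges and all of them
pass through `c`. -/
def IsStarCenter (B : SimpleGraph ℕ) (c : ℕ) : Prop :=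
  B.edgeSet.Nonempty ∧ ∀ e ∈ B.edgeSet, c ∈ e

/- The edge `xy` of `K_v` lies in some star of the design, and the center of that star is `x` or
`y`. So two distinct vertices can never both avoid being centers. -/

theorem IsCopy.exists_forall_mem_of_starGraph {β : Type*} {k : ℕ} {B : SimpleGraph β}
    (hB : IsCopy (_root_.starGraph k) B) : ∃ c, ∀ e ∈ B.edgeSet, c ∈ e := by
  obtain ⟨φ, hφ⟩ := hB
  refine ⟨φ 0, fun e he => ?_⟩
  induction e with
  | h x y =>
    obtain ⟨a, b, ⟨-, ha | hb⟩, rfl, rfl⟩ := (hφ x y).1 he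
    · exact ha ▸ Sym2.mem_mk_left _ _
    · exact hb ▸ Sym2.mem_mk_right _ _

theorem IsCopy.exists_mem_isStarCenter_of_starGraph {k : ℕ} {B : SimpleGraph ℕ}
    (hB : IsCopy (_root_.starGraph k) B) {e : Sym2 ℕ} (he : e ∈ B.edgeSet) :
    ∃ c ∈ e, IsStarCenter B c := by
  obtain ⟨c, hc⟩ := hB.exists_forall_mem_of_starGraph
  exact ⟨c, hc e he, ⟨e, he⟩, hc⟩

theorem stmt8_general (k v : ℕ) (D : Set (SimpleGraph ℕ))
    (hD : IsDesign (Kon (Set.Iio v)) (_root_.starGraph k) D) :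
    Set.Subsingleton {x | x ∈ Set.Iio v ∧ ∀ B ∈ D, ¬ IsStarCenter B x} := by
  rintro x ⟨hxv, hx⟩ y ⟨hyv, hy⟩
  by_contra hxy
  have hxyK : s(x, y) ∈ (Kon (Set.Iio v)).edgeSet := ⟨hxy, hxv, hyv⟩
  obtain ⟨B, ⟨hBD, hxyB⟩, -⟩ := hD.2 _ hxyK
  obtain ⟨c, hc, hcB⟩ := (hD.1 B hBD).2.1.exists_mem_isStarCenter_of_starGraph hxyB
  rcases Sym2.mem_iff.1 hc with rfl | rfl
  · exact hx B hBD hcB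
  · exact hy B hBD hcB

/-- In a `(K_v,S_k)`-design, at most one vertex fails to be the center of any
block. -/
theorem stmt8 (k v : ℕ) (hk : 2 ≤ k) (D : Set (SimpleGraph ℕ))
    (hD : IsDesign (Kon (Set.Iio v)) (_root_.starGraph k) D) :
    Set.Subsingleton {x | x ∈ Set.Iio v ∧ ∀ B ∈ D, ¬ IsStarCenter B x} :=
  stmt8_general k v D hD
end

section
/- If there exists a down-link from a (K_v, C₄)-design to a (K_n, P₃)-design, then n ≥ v−1. -/
open SimpleGraph

/-!
Suppose `n + 1 < v`. The edge `{n, n+1}` of `K_v` lies in a block `B` of the `C₄`-design, whose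
support has four vertices. Its image under the down-link is a `P₃` inside both `B` and `K_n`,
so `B` contains three vertices below `n` besides `n` and `n + 1`: five vertices in all.
-/

variable {α β : Type*}

lemma support_subset_of_le_Kon {G : SimpleGraph ℕ} {s : Set ℕ} (h : G ≤ Kon s) :
    G.support ⊆ s := fun _ ⟨_, hx⟩ => (h hx).2.1

lemma IsCopy.support_eq_image {Γ : SimpleGraph α} {B : SimpleGraph β} (h : IsCopy Γ B) :
    ∃ φ : α ↪ β, B.support = φ '' Γ.support := by
  obtain ⟨φ, hφ⟩ := h
  refine ⟨φ, Set.ext fun x => ⟨fun ⟨y, hxy⟩ => ?_, ?_⟩⟩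
  · obtain ⟨a, b, hab, rfl, -⟩ := (hφ x y).1 hxy
    exact ⟨a, ⟨b, hab⟩, rfl⟩
  · rintro ⟨a, ⟨b, hab⟩, rfl⟩
    exact ⟨φ b, (hφ _ _).2 ⟨a, b, hab, rfl, rfl⟩⟩

lemma IsCopy.ncard_support {Γ : SimpleGraph α} {B : SimpleGraph β} (h : IsCopy Γ B) :
    B.support.ncard = Γ.support.ncard := by
  obtain ⟨φ, hφ⟩ := h.support_eq_image
  rw [hφ, Set.ncard_image_of_injective _ φ.injective]

lemma ncard_support_pathGraph_three : (pathGraph 3).support.ncard = 3 := by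
  rw [(pathGraph_connected 2).preconnected.support_eq_univ, Set.ncard_univ, Nat.card_fin]

lemma ncard_support_cycleGraph_four : (cycleGraph 4).support.ncard = 4 := by
  rw [cycleGraph_preconnected.support_eq_univ, Set.ncard_univ, Nat.card_fin]

lemma IsDesign.exists_mem_adj {G : SimpleGraph β} {Γ : SimpleGraph α} {D : Set (SimpleGraph β)}
    (hD : IsDesign G Γ D) {x y : β} (hxy : G.Adj x y) : ∃ B ∈ D, B.Adj x y := by
  obtain ⟨B, ⟨hB, hBxy⟩, -⟩ := hD.2 s(x, y) hxy
  exact ⟨B, hB, hBxy⟩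

lemma SimpleGraph.ncard_support_add_two_le {P B : SimpleGraph β} {s : Set β} (hPB : P ≤ B)
    (hPs : P.support ⊆ s) (hfin : B.support.Finite) {x y : β} (hxy : B.Adj x y)
    (hx : x ∉ s) (hy : y ∉ s) : P.support.ncard + 2 ≤ B.support.ncard := by
  have hsub : insert x (insert y P.support) ⊆ B.support :=
    Set.insert_subset ⟨y, hxy⟩ (Set.insert_subset ⟨x, hxy.symm⟩ (support_mono hPB))
  have hPfin : P.support.Finite := hfin.subset (support_mono hPB)
  have hxy' : x ∉ insert y P.support := by
    rintro (rfl | h)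
    exacts [hxy.ne rfl, hx (hPs h)]
  calc P.support.ncard + 2
      = (insert x (insert y P.support)).ncard := by
        rw [Set.ncard_insert_of_notMem hxy' (hPfin.insert y),
          Set.ncard_insert_of_notMem (fun h => hy (hPs h)) hPfin]
    _ ≤ B.support.ncard := Set.ncard_le_ncard hsub hfin

/-- A down-link from a `(K_v,C₄)`-design to a `(K_n,P₃)`-design forces
`n ≥ v - 1`. -/
theorem stmt10 (v n : ℕ) (D D' : Set (SimpleGraph ℕ))
    (hD : IsDesign (Kon (Set.Iio v)) (cycleGraph 4) D)
    (hD' : IsDesign (Kon (Set.Iio n)) (pathGraph 3) D')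
    (f : SimpleGraph ℕ → SimpleGraph ℕ) (hf : IsDownlink D D' f) :
    v - 1 ≤ n := by
  by_contra! hnv
  have hedge : (Kon (Set.Iio v)).Adj n (n + 1) :=
    ⟨by omega, Set.mem_Iio.2 (by omega), Set.mem_Iio.2 (by omega)⟩
  obtain ⟨B, hBD, hB⟩ := hD.exists_mem_adj hedge
  obtain ⟨hfBD', hfB⟩ := hf B hBD
  obtain ⟨hfBK, hfBcopy, -⟩ := hD'.1 (f B) hfBD'
  have hB4 : B.support.ncard = 4 := by
    rw [(hD.1 B hBD).2.1.ncard_support, ncard_support_cycleGraph_four]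
  have h5 := ncard_support_add_two_le hfB (support_subset_of_le_Kon hfBK)
    (Set.finite_of_ncard_ne_zero (by omega)) hB (by simp) (by simp)
  rw [hfBcopy.ncard_support, ncard_support_pathGraph_three] at h5
  omega
end

section
/- For every t ≥ 1, the family F = { [2i−1, 3t+i, 0 ⋈ 2i] : i = 1,…,t } of kites with vertices in Z_{8t+1} is a (Z_{8t+1}, {0}, D, 1)-difference family: the list of differences x−y over ordered pairs (x,y) of adjacent vertices of kites in F covers each nonzero element of Z_{8t+1} exactly once. -/
open SimpleGraph

/-- The list of differences of the kite `[a, b, c ⋈ d]`, whose edges are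
`{c,a}, {c,b}, {c,d}, {a,b}`. -/
def kiteDiffs {G : Type*} [AddCommGroup G] (a b c d : G) : Multiset G :=
  {c - a, a - c, c - b, b - c, c - d, d - c, a - b, b - a}

/-!
The kite `[2i-1, 3t+i, 0 ⋈ 2i]` has the differences `±(2i-1), ±2i, ±(3t+1-i), ±(3t+i)`.
As `i` runs over `1, …, t` the half-differences `2i-1, 2i, 3t+1-i, 3t+i` run over
`1, …, 4t`, so every nonzero `g ∈ ℤ_{8t+1}` occurs among the `8t` differences, being
either a half-difference or the negative of one. Since there are exactly `8t` nonzero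
residues, no difference can occur twice.
-/

theorem Multiset.nodup_of_forall_mem_of_card_le {α : Type*} [DecidableEq α]
    {M : Multiset α} (s : Finset α) (hs : ∀ x ∈ s, x ∈ M) (hcard : card M ≤ s.card) :
    M.Nodup := by
  have hsub : s ⊆ M.toFinset := fun x hx => Multiset.mem_toFinset.2 (hs x hx)
  have h₁ := Finset.card_le_card hsub
  have h₂ := Multiset.toFinset_card_le M
  exact Multiset.toFinset_card_eq_card_iff_nodup.1 (by omega)

theorem ZMod.exists_eq_natCast_or_eq_neg_natCast {m : ℕ} [NeZero m] (g : ZMod m)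
    (hg : g ≠ 0) : ∃ n, 1 ≤ n ∧ 2 * n ≤ m ∧ (g = n ∨ g = -n) := by
  have hlt : g.val < m := ZMod.val_lt g
  have hpos : g.val ≠ 0 := (ZMod.val_ne_zero g).2 hg
  by_cases hhalf : 2 * g.val ≤ m
  · exact ⟨g.val, by omega, hhalf, Or.inl (ZMod.natCast_zmod_val g).symm⟩
  · refine ⟨m - g.val, by omega, by omega, Or.inr ?_⟩
    rw [Nat.cast_sub hlt.le, ZMod.natCast_zmod_val, ZMod.natCast_self, zero_sub, neg_neg]

theorem exists_kite_halfDiff {t n : ℕ} (hn : 1 ≤ n) (hnt : n ≤ 4 * t) :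
    ∃ i, 1 ≤ i ∧ i ≤ t ∧ (n = 2 * i - 1 ∨ n = 2 * i ∨ n = 3 * t + 1 - i ∨ n = 3 * t + i) := by
  rcases Nat.lt_or_ge (2 * t) n with h2 | h2
  · rcases Nat.lt_or_ge (3 * t) n with h3 | h3
    · exact ⟨n - 3 * t, by omega⟩
    · exact ⟨3 * t + 1 - n, by omega⟩
  · exact ⟨(n + 1) / 2, by omega⟩

theorem neg_mem_kiteDiffs {G : Type*} [AddCommGroup G] {a b c d x : G}
    (hx : x ∈ kiteDiffs a b c d) : -x ∈ kiteDiffs a b c d := by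
  simp only [kiteDiffs, Multiset.insert_eq_cons, Multiset.mem_cons,
    Multiset.mem_singleton] at hx ⊢
  rcases hx with rfl | rfl | rfl | rfl | rfl | rfl | rfl | rfl <;> simp

theorem natCast_mem_kiteDiffs {R : Type*} [AddCommGroupWithOne R] {t i n : ℕ}
    (hi : 1 ≤ i) (hit : i ≤ 3 * t + 1)
    (hn : n = 2 * i - 1 ∨ n = 2 * i ∨ n = 3 * t + 1 - i ∨ n = 3 * t + i) :
    (n : R) ∈ kiteDiffs ((2 * i - 1 : ℕ) : R) ((3 * t + i : ℕ) : R) 0 ((2 * i : ℕ) : R) := by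
  have hba : ((3 * t + i : ℕ) : R) - ((2 * i - 1 : ℕ) : R) = ((3 * t + 1 - i : ℕ) : R) := by
    rw [sub_eq_iff_eq_add, ← Nat.cast_add]
    congr 1
    omega
  simp only [kiteDiffs, Multiset.insert_eq_cons, Multiset.mem_cons, Multiset.mem_singleton,
    sub_zero, hba]
  rcases hn with rfl | rfl | rfl | rfl <;> simp

theorem card_kiteDiffs {G : Type*} [AddCommGroup G] (a b c d : G) :
    Multiset.card (kiteDiffs a b c d) = 8 := rfl

theorem stmt13_general (t : ℕ) (g : ZMod (8 * t + 1)) (hg : g ≠ 0) :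
    Multiset.count g ((Finset.Icc 1 t).val.bind fun i =>
      kiteDiffs ((2 * i - 1 : ℕ) : ZMod (8 * t + 1))
        ((3 * t + i : ℕ) : ZMod (8 * t + 1)) 0 ((2 * i : ℕ) : ZMod (8 * t + 1))) = 1 := by
  set M := (Finset.Icc 1 t).val.bind fun i =>
      kiteDiffs ((2 * i - 1 : ℕ) : ZMod (8 * t + 1))
        ((3 * t + i : ℕ) : ZMod (8 * t + 1)) 0 ((2 * i : ℕ) : ZMod (8 * t + 1))
  have hcover : ∀ x : ZMod (8 * t + 1), x ≠ 0 → x ∈ M := by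
    intro x hx
    obtain ⟨n, hn, hnt, hxn⟩ := ZMod.exists_eq_natCast_or_eq_neg_natCast x hx
    obtain ⟨i, hi, hit, hni⟩ := exists_kite_halfDiff hn (by omega : n ≤ 4 * t)
    have hmem := natCast_mem_kiteDiffs (R := ZMod (8 * t + 1)) hi (by omega) hni
    refine Multiset.mem_bind.2 ⟨i, Finset.mem_Icc.2 ⟨hi, hit⟩, ?_⟩
    rcases hxn with rfl | rfl
    exacts [hmem, neg_mem_kiteDiffs hmem]
  have hcard : Multiset.card M = 8 * t := by
    simp [M, Multiset.card_bind, card_kiteDiffs, mul_comm]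
  have hnonzero : (Finset.univ.erase (0 : ZMod (8 * t + 1))).card = 8 * t := by
    simp [Finset.card_erase_of_mem]
  have hnodup : M.Nodup := Multiset.nodup_of_forall_mem_of_card_le _
    (fun x hx => hcover x (Finset.ne_of_mem_erase hx)) (hcard.trans hnonzero.symm).le
  exact Multiset.count_eq_one_of_mem hnodup (hcover g hg)

/-- `F = {[2i-1, 3t+i, 0 ⋈ 2i] : 1 ≤ i ≤ t}` is a
`(ℤ_{8t+1}, {0}, D, 1)`-difference family: each nonzero element of `ℤ_{8t+1}`
occurs exactly once among the differences. -/
theorem stmt13 (t : ℕ) (ht : 1 ≤ t) (g : ZMod (8 * t + 1)) (hg : g ≠ 0) :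
    Multiset.count g ((Finset.Icc 1 t).val.bind fun i =>
      kiteDiffs ((2 * i - 1 : ℕ) : ZMod (8 * t + 1))
        ((3 * t + i : ℕ) : ZMod (8 * t + 1)) 0 ((2 * i : ℕ) : ZMod (8 * t + 1))) = 1 :=
  stmt13_general t g hg
end
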